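/- For all k1, k2 ∈ SU(2), the matrix O = Q† (k1⊗k2) Q lies in SO(4): all entries of O are real, OᵀO = I, and det O = 1. -/

import Mathlib

open Matrix Complex

noncomputable section

/-- Pauli matrix σx. -/
def sigmaX : Matrix (Fin 2) (Fin 2) ℂ := !![0, 1; 1, 0]
/-- Pauli matrix σy. -/
def sigmaY : Matrix (Fin 2) (Fin 2) ℂ := !![0, -I; I, 0]
/-- Pauli matrix σz. -/
def sigmaZ : Matrix (Fin 2) (Fin 2) ℂ := !![1, 0; 0, -1]

/-- Kronecker product of two 2×2 complex matrices, as a 4×4 matrix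
(row-major ordering: entry ((2i+k),(2j+l)) is `A i j * B k l`). -/
def kron (A B : Matrix (Fin 2) (Fin 2) ℂ) : Matrix (Fin 4) (Fin 4) ℂ :=
  Matrix.of fun i j =>
    A ⟨i.val / 2, by have := i.isLt; omega⟩ ⟨j.val / 2, by have := j.isLt; omega⟩ *
    B ⟨i.val % 2, by have := i.isLt; omega⟩ ⟨j.val % 2, by have := j.isLt; omega⟩

/-- Membership in SU(2): 2×2 unitary with determinant 1. -/
def InSU2 (k : Matrix (Fin 2) (Fin 2) ℂ) : Prop := kᴴ * k = 1 ∧ k.det = 1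

/-- The transformation from the computational basis to the Bell basis. -/
def Qmat : Matrix (Fin 4) (Fin 4) ℂ :=
  (((Real.sqrt 2 : ℝ) : ℂ))⁻¹ • !![1, 0, 0, I; 0, I, 1, 0; 0, I, -1, 0; 1, 0, 0, -I]

/-- Auxiliary: explicit form of the Kronecker product. -/
lemma kron_explicit' (A B : Matrix (Fin 2) (Fin 2) ℂ) :
    kron A B = !![A 0 0 * B 0 0, A 0 0 * B 0 1, A 0 1 * B 0 0, A 0 1 * B 0 1;
                  A 0 0 * B 1 0, A 0 0 * B 1 1, A 0 1 * B 1 0, A 0 1 * B 1 1;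
                  A 1 0 * B 0 0, A 1 0 * B 0 1, A 1 1 * B 0 0, A 1 1 * B 0 1;
                  A 1 0 * B 1 0, A 1 0 * B 1 1, A 1 1 * B 1 0, A 1 1 * B 1 1] := by
  ext i j
  fin_cases i <;> fin_cases j <;> simp [kron] <;> rfl

/-- Auxiliary: entries of an SU(2) matrix. -/
lemma su2_entries' (k : Matrix (Fin 2) (Fin 2) ℂ) (h : InSU2 k) :
    k 1 0 = -(starRingEnd ℂ) (k 0 1) ∧ k 1 1 = (starRingEnd ℂ) (k 0 0) := by
  obtain ⟨hu, hd⟩ := h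
  have hadj : kᴴ = k.adjugate := by
    have h2 : k * k.adjugate = 1 := by rw [Matrix.mul_adjugate, hd, one_smul]
    calc kᴴ = kᴴ * (k * k.adjugate) := by rw [h2, mul_one]
    _ = (kᴴ * k) * k.adjugate := by rw [Matrix.mul_assoc]
    _ = k.adjugate := by rw [hu, one_mul]
  have e1 := congrFun (congrFun hadj 1) 0
  have e2 := congrFun (congrFun hadj 1) 1
  rw [Matrix.adjugate_fin_two] at e1 e2
  simp [Matrix.conjTranspose_apply] at e1 e2
  constructor
  · rw [e1, neg_neg]
  · have := congrArg (starRingEnd ℂ) e2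
    simpa using this

/-- Auxiliary: the matrix k1 ⊗ k2 for k1 = [[a,b],[-b̄,ā]], k2 = [[e,f],[-f̄,ē]]. -/
def Mk' (a b e f : ℂ) : Matrix (Fin 4) (Fin 4) ℂ :=
  !![a * e, a * f, b * e, b * f;
     a * -(starRingEnd ℂ) f, a * (starRingEnd ℂ) e, b * -(starRingEnd ℂ) f, b * (starRingEnd ℂ) e;
     -(starRingEnd ℂ) b * e, -(starRingEnd ℂ) b * f, (starRingEnd ℂ) a * e, (starRingEnd ℂ) a * f;
     -(starRingEnd ℂ) b * -(starRingEnd ℂ) f, -(starRingEnd ℂ) b * (starRingEnd ℂ) e,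
       (starRingEnd ℂ) a * -(starRingEnd ℂ) f, (starRingEnd ℂ) a * (starRingEnd ℂ) e]

set_option maxHeartbeats 1000000 in
/-- Auxiliary: the conjugated matrix has real entries. -/
lemma real_entries' (a b e f : ℂ) (i j : Fin 4) :
    (starRingEnd ℂ) ((Qmatᴴ * Mk' a b e f * Qmat) i j) = (Qmatᴴ * Mk' a b e f * Qmat) i j := by
  fin_cases i <;> fin_cases j <;>
  · simp only [Qmat, Mk', Matrix.mul_apply, Fin.sum_univ_four, Matrix.smul_apply, Matrix.of_apply,
      Matrix.conjTranspose_apply, Matrix.cons_val', Matrix.cons_val_zero,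
      Matrix.cons_val_one, Matrix.head_cons, Matrix.head_fin_const, Matrix.empty_val',
      Matrix.cons_val_fin_one, Matrix.cons_val_two, Matrix.cons_val_three, Matrix.tail_cons,
      smul_eq_mul, Fin.isValue, Fin.reduceFinMk, Complex.star_def,
      map_add, _root_.map_mul, map_neg, map_zero, _root_.map_one, conj_I,
      Complex.conj_ofReal, conj_conj, map_inv₀]
    ring

/-- Auxiliary: Qmat is unitary. -/
lemma Q_unitary₁ : Qmatᴴ * Qmat = 1 := by
  ext i j
  fin_cases i <;> fin_cases j <;>
    simp [Qmat, Matrix.mul_apply, Fin.sum_univ_four, Matrix.one_apply, Complex.ext_iff] <;>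
    nlinarith [Real.sq_sqrt (by norm_num : (2:ℝ) ≥ 0), Real.sqrt_nonneg 2]

/-- Auxiliary: Qmat is unitary (other side). -/
lemma Q_unitary₂ : Qmat * Qmatᴴ = 1 := by
  ext i j
  fin_cases i <;> fin_cases j <;>
    simp [Qmat, Matrix.mul_apply, Fin.sum_univ_four, Matrix.one_apply, Complex.ext_iff] <;>
    nlinarith [Real.sq_sqrt (by norm_num : (2:ℝ) ≥ 0), Real.sqrt_nonneg 2]

set_option maxHeartbeats 1000000 in
/-- Auxiliary: Mk' is unitary given the SU(2) normalizations. -/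
lemma Mk'_unitary (a b e f : ℂ)
    (hn1 : a * (starRingEnd ℂ) a + b * (starRingEnd ℂ) b = 1)
    (hn2 : e * (starRingEnd ℂ) e + f * (starRingEnd ℂ) f = 1) :
    (Mk' a b e f)ᴴ * Mk' a b e f = 1 := by
  ext i j
  fin_cases i <;> fin_cases j <;>
  · simp only [Mk', Matrix.mul_apply, Fin.sum_univ_four, Matrix.of_apply,
      Matrix.conjTranspose_apply, Matrix.cons_val', Matrix.cons_val_zero,
      Matrix.cons_val_one, Matrix.head_cons, Matrix.head_fin_const, Matrix.empty_val',
      Matrix.cons_val_fin_one, Matrix.cons_val_two, Matrix.cons_val_three, Matrix.tail_cons,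
      Fin.isValue, Fin.reduceFinMk, Complex.star_def, Matrix.one_apply, Fin.reduceEq,
      map_add, _root_.map_mul, map_neg, conj_conj, if_true, if_false, ite_true, ite_false,
      reduceIte]
    first | ring1 | linear_combination (e * (starRingEnd ℂ) e + f * (starRingEnd ℂ) f) * hn1 + hn2

set_option maxHeartbeats 1000000 in
/-- Auxiliary: Mk' has determinant 1 given the SU(2) normalizations. -/
lemma Mk'_det (a b e f : ℂ)
    (hn1 : a * (starRingEnd ℂ) a + b * (starRingEnd ℂ) b = 1)
    (hn2 : e * (starRingEnd ℂ) e + f * (starRingEnd ℂ) f = 1) :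
    (Mk' a b e f).det = 1 := by
  rw [Mk']
  simp [Matrix.det_succ_row_zero, Fin.sum_univ_succ, Fin.succAbove, Fin.castSucc, Fin.castAdd, Fin.castLE]
  linear_combination
    ((a * (starRingEnd ℂ) a + b * (starRingEnd ℂ) b) + 1) *
      (e * (starRingEnd ℂ) e + f * (starRingEnd ℂ) f)^2 * hn1 +
    ((e * (starRingEnd ℂ) e + f * (starRingEnd ℂ) f) + 1) * hn2

/-- For k1, k2 ∈ SU(2), the matrix O = Q†(k1⊗k2)Q lies in SO(4): it has real
entries, is orthogonal, and has determinant 1. -/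
theorem bell_conjugate_local_in_SO4 (k1 k2 : Matrix (Fin 2) (Fin 2) ℂ)
    (h1 : InSU2 k1) (h2 : InSU2 k2) :
    (∀ i j, ((Qmatᴴ * kron k1 k2 * Qmat) i j).im = 0) ∧
    (Qmatᴴ * kron k1 k2 * Qmat)ᵀ * (Qmatᴴ * kron k1 k2 * Qmat) = 1 ∧
    (Qmatᴴ * kron k1 k2 * Qmat).det = 1 := by
  obtain ⟨hc1, hd1⟩ := su2_entries' k1 h1
  obtain ⟨hc2, hd2⟩ := su2_entries' k2 h2
  have hM : kron k1 k2 = Mk' (k1 0 0) (k1 0 1) (k2 0 0) (k2 0 1) := by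
    rw [kron_explicit', hc1, hd1, hc2, hd2]; rfl
  have hn1 : k1 0 0 * (starRingEnd ℂ) (k1 0 0) + k1 0 1 * (starRingEnd ℂ) (k1 0 1) = 1 := by
    have hdet := h1.2
    rw [Matrix.det_fin_two, hc1, hd1] at hdet
    linear_combination hdet
  have hn2 : k2 0 0 * (starRingEnd ℂ) (k2 0 0) + k2 0 1 * (starRingEnd ℂ) (k2 0 1) = 1 := by
    have hdet := h2.2
    rw [Matrix.det_fin_two, hc2, hd2] at hdet
    linear_combination hdet
  have hreal : ∀ i j, (starRingEnd ℂ) ((Qmatᴴ * kron k1 k2 * Qmat) i j)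
      = (Qmatᴴ * kron k1 k2 * Qmat) i j := by
    intro i j; rw [hM]; exact real_entries' _ _ _ _ i j
  have hU : (kron k1 k2)ᴴ * kron k1 k2 = 1 := by
    rw [hM]; exact Mk'_unitary _ _ _ _ hn1 hn2
  refine ⟨fun i j => Complex.conj_eq_iff_im.mp (hreal i j), ?_, ?_⟩
  · have hOt : (Qmatᴴ * kron k1 k2 * Qmat)ᵀ = (Qmatᴴ * kron k1 k2 * Qmat)ᴴ := by
      ext i j
      simp only [Matrix.transpose_apply, Matrix.conjTranspose_apply, Complex.star_def]
      exact (hreal j i).symm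
    rw [hOt]
    calc (Qmatᴴ * kron k1 k2 * Qmat)ᴴ * (Qmatᴴ * kron k1 k2 * Qmat)
        = Qmatᴴ * ((kron k1 k2)ᴴ * ((Qmat * Qmatᴴ) * (kron k1 k2 * Qmat))) := by
          simp only [Matrix.conjTranspose_mul, Matrix.conjTranspose_conjTranspose]
          simp only [Matrix.mul_assoc]
      _ = Qmatᴴ * ((kron k1 k2)ᴴ * (kron k1 k2 * Qmat)) := by rw [Q_unitary₂, Matrix.one_mul]
      _ = Qmatᴴ * (((kron k1 k2)ᴴ * kron k1 k2) * Qmat) := by rw [Matrix.mul_assoc]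
      _ = Qmatᴴ * Qmat := by rw [hU, Matrix.one_mul]
      _ = 1 := Q_unitary₁
  · have hdQ : Qmatᴴ.det * Qmat.det = 1 := by
      rw [← Matrix.det_mul, Q_unitary₁, Matrix.det_one]
    have hdU : (kron k1 k2).det = 1 := by
      rw [hM]; exact Mk'_det _ _ _ _ hn1 hn2
    rw [Matrix.det_mul, Matrix.det_mul, hdU, mul_one, hdQ]

end
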